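/- In the game G_{1,2d} with arbitrarily modified initial segment: if the first N-1 values x_1, ..., x_{N-1} are arbitrary elements of {0,1,2} and x_n = mex{x_{n-1}, x_{⌈n/(2d)⌉}} for n ≥ N, then for all even n ≥ 2dN, x_n ≠ 0. -/

import Mathlib

/-!
Only whether a value vanishes matters: for `n ≥ N`, `x n = 0` iff `x (n - 1) ≠ 0` and
`x ⌈n / 2d⌉ ≠ 0`. Call `(2d(k-1), 2dk]` the `k`-th block; its positions share the parent `x k`.
If an even position of a block is zero, its parent is nonzero, so zeros and non-zeros alternate
going down the block and the zero reaches the block start `2d(k-1)`, the end of the previous block.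
Iterating, a zero at an even `n ≥ 2dN` produces `x (2d(N-1)) = 0` and `x N ≠ 0`. The latter
forces `x q = 0` for the parent `q` of `N`, while descending from `2d(N-1)` along block ends
gives `x (2dq) = 0`, hence `x q ≠ 0`.
-/

/-- mex of the two-element set {a, b}: the least natural number not in {a, b}. -/
def mex2 (a b : ℕ) : ℕ :=
  if 0 ≠ a ∧ 0 ≠ b then 0 else if 1 ≠ a ∧ 1 ≠ b then 1 else if 2 ≠ a ∧ 2 ≠ b then 2 else 3

lemma mex2_eq_zero_iff (a b : ℕ) : mex2 a b = 0 ↔ a ≠ 0 ∧ b ≠ 0 := by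
  unfold mex2
  split_ifs <;> grind

lemma exists_eq_mul_add_of_pos {D m : ℕ} (hD : 0 < D) (hm : 0 < m) :
    ∃ k r, 0 < r ∧ r ≤ D ∧ m = D * k + r :=
  ⟨(m - 1) / D, (m - 1) % D + 1, by omega, by have := Nat.mod_lt (m - 1) hD; omega,
    by have := Nat.div_add_mod (m - 1) D; omega⟩

lemma add_pred_div_eq_of_mem_block {D k n : ℕ} (hlo : D * k < n) (hhi : n ≤ D * (k + 1)) :
    (n + (D - 1)) / D = k + 1 := by
  rw [mul_add, mul_one] at hhi
  apply Nat.div_eq_of_lt_le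
  · rw [add_mul, one_mul, mul_comm]; omega
  · rw [add_mul, add_mul, one_mul, mul_comm]; omega

section Game

variable {d N : ℕ} {x : ℕ → ℕ}
  (hrec : ∀ n, N ≤ n → x n = mex2 (x (n - 1)) (x ((n + (2 * d - 1)) / (2 * d))))
include hrec

lemma eq_zero_iff_of_mem_block {k n : ℕ} (hn : N ≤ n) (hlo : 2 * d * k < n)
    (hhi : n ≤ 2 * d * (k + 1)) : x n = 0 ↔ x (n - 1) ≠ 0 ∧ x (k + 1) ≠ 0 := by
  rw [hrec n hn, add_pred_div_eq_of_mem_block hlo hhi, mex2_eq_zero_iff]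

lemma ne_zero_of_blockEnd_eq_zero (hd : 0 < d) {k : ℕ} (hk : 0 < k) (hN : N ≤ 2 * d * k)
    (h : x (2 * d * k) = 0) : x k ≠ 0 := by
  obtain ⟨j, rfl⟩ : ∃ j, k = j + 1 := ⟨k - 1, by omega⟩
  exact ((eq_zero_iff_of_mem_block hrec hN (by rw [mul_add]; omega) le_rfl).1 h).2

lemma eq_zero_of_eq_zero_two_above {k i : ℕ} (hN : N ≤ i + 1) (hlo : 2 * d * k ≤ i)
    (hhi : i + 2 ≤ 2 * d * (k + 1)) (h : x (i + 2) = 0) : x i = 0 := by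
  obtain ⟨hprev, hparent⟩ :=
    (eq_zero_iff_of_mem_block hrec (by omega) (by omega) hhi).1 h
  have hodd := (eq_zero_iff_of_mem_block hrec (k := k) hN (by omega) (by omega)).not.1 hprev
  simpa [hparent] using hodd

lemma blockStart_eq_zero {k s : ℕ} (hN : N ≤ 2 * d * k + 1) (hs : s ≤ d)
    (h : x (2 * d * k + 2 * s) = 0) : x (2 * d * k) = 0 := by
  induction s with
  | zero => simpa using h
  | succ s ih =>
    refine ih (by omega) (eq_zero_of_eq_zero_two_above hrec (k := k) (by omega) (by omega) ?_ ?_)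
    · rw [mul_add]; omega
    · simpa [mul_add, add_assoc] using h

lemma blockEnd_eq_zero_of_add {k : ℕ} (hN : N ≤ 2 * d * k + 1) :
    ∀ t, x (2 * d * (k + t)) = 0 → x (2 * d * k) = 0
  | 0, h => h
  | t + 1, h => by
    refine blockEnd_eq_zero_of_add hN t (blockStart_eq_zero hrec (s := d) ?_ le_rfl ?_)
    · nlinarith
    · rw [← mul_add_one]
      rwa [← add_assoc] at h

lemma blockEnd_sub_one_ne_zero (hd : 0 < d) (hN : 2 ≤ N) (hxN : x N ≠ 0) :
    x (2 * d * (N - 1)) ≠ 0 := by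
  intro hbot
  have hNbot : N ≤ 2 * d * (N - 1) := by nlinarith [Nat.sub_add_cancel (by omega : 1 ≤ N)]
  obtain ⟨p, r, hr, hrd, hNpr⟩ := exists_eq_mul_add_of_pos (by omega : 0 < 2 * d) (by omega : 0 < N)
  have hp : p + 2 ≤ N := by
    by_contra! hp
    nlinarith
  have hpred : x (N - 1) ≠ 0 := ne_zero_of_blockEnd_eq_zero hrec hd (by omega) hNbot hbot
  have hparent : x (p + 1) = 0 := by
    by_contra hparent
    exact hxN ((eq_zero_iff_of_mem_block hrec le_rfl (by omega) (by rw [mul_add]; omega)).2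
      ⟨hpred, hparent⟩)
  have hend : x (2 * d * (p + 1)) = 0 :=
    blockEnd_eq_zero_of_add hrec (by rw [mul_add]; omega) (N - 2 - p)
      (by rwa [show p + 1 + (N - 2 - p) = N - 1 by omega])
  exact ne_zero_of_blockEnd_eq_zero hrec hd (by omega) (by rw [mul_add]; omega) hend hparent

lemma blockEnd_ne_zero (hd : 0 < d) (hN : 2 ≤ N) {k : ℕ} (hk : N ≤ k) :
    x (2 * d * k) ≠ 0 := by
  intro h
  obtain ⟨t, rfl⟩ := Nat.exists_eq_add_of_le hk
  have hend : x (2 * d * N) = 0 := blockEnd_eq_zero_of_add hrec (by nlinarith) t h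
  refine blockEnd_sub_one_ne_zero hrec hd hN
    (ne_zero_of_blockEnd_eq_zero hrec hd (by omega) (by nlinarith) hend)
    (blockStart_eq_zero hrec (s := d) (by nlinarith [Nat.sub_add_cancel (by omega : 1 ≤ N)])
      le_rfl ?_)
  rwa [← mul_add_one, Nat.sub_add_cancel (by omega : 1 ≤ N)]

end Game

theorem stmt_16_general (d N : ℕ) (hd : 1 ≤ d) (hN : 2 ≤ N) (x : ℕ → ℕ)
    (hrec : ∀ n, N ≤ n → x n = mex2 (x (n - 1)) (x ((n + (2 * d - 1)) / (2 * d)))) :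
    ∀ n, Even n → 2 * d * N ≤ n → x n ≠ 0 := by
  rintro n ⟨m, rfl⟩ hn h
  obtain ⟨k, s, hs, hsd, rfl⟩ := exists_eq_mul_add_of_pos hd (by nlinarith : 0 < m)
  have hk : N ≤ k + 1 := by nlinarith
  have hNk : N ≤ 2 * d * k + 1 := by nlinarith
  have hpos : x (2 * d * k + 2 * s) = 0 := by rw [← h]; ring_nf
  have hstart := blockStart_eq_zero hrec hNk hsd hpos
  have hparent : x (k + 1) ≠ 0 :=
    ((eq_zero_iff_of_mem_block hrec (by omega) (by omega) (by rw [mul_add]; omega)).1 hpos).2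
  rcases hk.eq_or_lt with hkN | hkN
  · exact blockEnd_sub_one_ne_zero hrec hd hN (hkN ▸ hparent) (by rwa [hkN, Nat.add_sub_cancel])
  · exact blockEnd_ne_zero hrec hd hN (by omega) hstart

theorem stmt_16 (d N : ℕ) (hd : 1 ≤ d) (hN : 2 ≤ N) (x : ℕ → ℕ)
    (hinit : ∀ i, 1 ≤ i → i ≤ N - 1 → x i ∈ ({0, 1, 2} : Set ℕ))
    (hrec : ∀ n, N ≤ n → x n = mex2 (x (n - 1)) (x ((n + (2 * d - 1)) / (2 * d)))) :
    ∀ n, Even n → 2 * d * N ≤ n → x n ≠ 0 :=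
  stmt_16_general d N hd hN x hrec
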